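/- arXiv:2008.11074 — 2 statements merged into one kernel-verified Lean document; each statement's English description precedes it below -/
import Mathlib

section
/- Let $(M,\pi)$ be a Poisson manifold and $V$ a vector field on $M$. The twisted Koszul–Brylinski operator $\delta = [\iota_\pi, d] + \iota_V$ on differential forms satisfies $\delta^2 = 0$ if and only if $V$ is a Poisson vector field, i.e. $[V,\pi]=0$. -/
/-!
Both summands of `δ = [ι_π, d] + ι_V` are odd operators squaring to zero, so `δ²` is their
anticommutator, which by Cartan's formula is `ι_{[V,π]}`; injectivity of `ι` finishes.
-/

theorem add_mul_self_eq_of_mul_self_eq_zero {R : Type*} [Ring R] {a b : R}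
    (ha : a * a = 0) (hb : b * b = 0) : (a + b) * (a + b) = a * b + b * a := by
  linear_combination (norm := noncomm_ring) ha + hb

theorem twisted_KB_squares_to_zero_iff_poisson_vector_field
    {Ω W : Type*} [AddCommGroup Ω] [Module ℝ Ω] [AddCommGroup W] [Module ℝ W]
    (ι : W →ₗ[ℝ] Module.End ℝ Ω) (hι : Function.Injective ι)
    (d : Module.End ℝ Ω)
    (π V bVπ : W)
    -- integrability of π : the Koszul–Brylinski differential δ_KB = [ι_π, d] squares to zero
    (hKB : (ι π * d - d * ι π) * (ι π * d - d * ι π) = 0)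
    -- interior product with a vector field squares to zero
    (hV2 : ι V * ι V = 0)
    -- Cartan's formula ι_{[π,V]} = [[ι_π,d], ι_V] (graded commutator = anticommutator)
    (hCartan : ι bVπ =
      (ι π * d - d * ι π) * ι V + ι V * (ι π * d - d * ι π)) :
    ((ι π * d - d * ι π + ι V) * (ι π * d - d * ι π + ι V) = 0) ↔ bVπ = 0 := by
  rw [add_mul_self_eq_of_mul_self_eq_zero hKB hV2, ← hCartan]
  exact map_eq_zero_iff ι hι
end

section
/- Let $(M,\pi)$ be a Poisson manifold with volume form $\mu$ and $V = \pi^\sharp(\delta_{\pi,\mu}\beta)$ for a 2-form $\beta$. Then $[V,\pi] = \pi(d\,\delta_{\pi,\mu}\beta)\,\pi - \tfrac{1}{2}\,\pi\wedge\pi(d\,\delta_{\pi,\mu}\beta,\cdot)$, where $\pi(\gamma)$ for a 2-form $\gamma$ denotes the full contraction $\iota_\pi\gamma$ and $\pi\wedge\pi(\gamma,\cdot)$ denotes the 2-vector obtained by contracting $\pi\wedge\pi$ with $\gamma$. -/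
/-! For `P = Q = π` both bracket terms of the Schouten identity coincide and the left-hand side
is the contraction of `[π, π] = 0`, so the identity becomes the linear equation
`0 = -2 [V, π] - (π ∧ π)(dδβ, ·) + 2 π(dδβ) π`, which is solved for `[V, π]`. -/

theorem eq_sub_half_smul_of_two_smul_eq {K M : Type*} [DivisionRing K] [NeZero (2 : K)]
    [AddCommGroup M] [Module K M] {x y z : M} (h : (2 : K) • x = (2 : K) • y - z) :
    x = y - (1 / 2 : K) • z := by
  have h2 : (2 : K) ≠ 0 := two_ne_zero
  calc x = (1 / 2 : K) • ((2 : K) • x) := by rw [smul_smul, one_div_mul_cancel h2, one_smul]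
    _ = y - (1 / 2 : K) • z := by rw [h, smul_sub, smul_smul, one_div_mul_cancel h2, one_smul]

section SchoutenIdentity

variable {R W : Type*} [CommRing R] [Algebra ℝ R] [Ring W] [Algebra R W] [Module ℝ W]
  {sb : W →ₗ[ℝ] W →ₗ[ℝ] W} {ca cda : W →ₗ[ℝ] W} {fda : W →ₗ[ℝ] R}

theorem contraction_bracket_self
    (hid : ∀ P Q : W, ca (sb P Q) =
      - sb (ca P) Q - sb (ca Q) P - cda (P * Q) + fda P • Q + fda Q • P) (P : W) :
    ca (sb P P) = (2 : ℝ) • (fda P • P) - cda (P * P) - (2 : ℝ) • sb (ca P) P := by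
  rw [hid P P, two_smul, two_smul]
  abel

end SchoutenIdentity

theorem bracket_of_hamiltonian_flow_field_with_poisson_tensor_general
    {R W : Type*} [CommRing R] [Algebra ℝ R] [Ring W] [Algebra R W]
    [Module ℝ W]
    (sb : W →ₗ[ℝ] W →ₗ[ℝ] W)
    (ca cda : W →ₗ[ℝ] W) (fda : W →ₗ[ℝ] R)
    (π : W)
    (hπ : sb π π = 0)
    (hid : ∀ P Q : W, ca (sb P Q) =
      - sb (ca P) Q - sb (ca Q) P - cda (P * Q) + fda P • Q + fda Q • P) :
    sb (ca π) π = fda π • π - ((1 : ℝ) / 2) • cda (π * π) := by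
  have hlin := contraction_bracket_self hid π
  rw [hπ, map_zero, eq_comm, sub_eq_zero] at hlin
  exact eq_sub_half_smul_of_two_smul_eq hlin.symm

theorem bracket_of_hamiltonian_flow_field_with_poisson_tensor
    {R W : Type*} [CommRing R] [Algebra ℝ R] [Ring W] [Algebra R W]
    [Module ℝ W] [IsScalarTower ℝ R W]
    (sb : W →ₗ[ℝ] W →ₗ[ℝ] W)
    (ca cda : W →ₗ[ℝ] W) (fda : W →ₗ[ℝ] R)
    (π : W)
    (hπ : sb π π = 0)
    (hid : ∀ P Q : W, ca (sb P Q) =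
      - sb (ca P) Q - sb (ca Q) P - cda (P * Q) + fda P • Q + fda Q • P) :
    sb (ca π) π = fda π • π - ((1 : ℝ) / 2) • cda (π * π) :=
  bracket_of_hamiltonian_flow_field_with_poisson_tensor_general sb ca cda fda π hπ hid
end
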